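/- Let d n : ℕ with d, n ≥ 1. Let ρA : Matrix (Fin d) (Fin d) ℂ be positive definite, μ : Fin n → ℝ with 0 < μ s for all s, and σ¼ := ρA¼ ⊗ₖ Matrix.diagonal (fun s => ((μ s) ^ (1/4 : ℝ) : ℂ)), where ρA¼ is the positive semidefinite square root of the positive semidefinite square root of ρA. Define P := { σ¼ * M * σ¼ | M positive semidefinite } and Pτ := Γ '' P. Then for every Hermitian X : Matrix (Fin d × Fin n) (Fin d × Fin n) ℂ: X belongs to the closure of the convex hull (over ℝ) of P ∪ Pτ if and only if for every ξ ∈ P ∩ Pτ one has 0 ≤ (Tr(ξ * X)).re. -/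

import Mathlib

open Matrix ComplexOrder Kronecker

namespace Matrix.PosSemidef

noncomputable def sqrt {n 𝕜 : Type*} [Fintype n] [DecidableEq n] [RCLike 𝕜]
    {A : Matrix n n 𝕜} (hA : A.PosSemidef) : Matrix n n 𝕜 :=
  hA.1.eigenvectorUnitary.1 * diagonal ((↑) ∘ (√·) ∘ hA.1.eigenvalues) *
    (star hA.1.eigenvectorUnitary : Matrix n n 𝕜)

theorem posSemidef_sqrt {n 𝕜 : Type*} [Fintype n] [DecidableEq n] [RCLike 𝕜]
    {A : Matrix n n 𝕜} (hA : A.PosSemidef) : hA.sqrt.PosSemidef := by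
  unfold sqrt
  refine PosSemidef.mul_mul_conjTranspose_same ?_ _
  refine (posSemidef_diagonal_iff).2 fun i => ?_
  simp only [Function.comp_apply]
  exact_mod_cast Real.sqrt_nonneg _

end Matrix.PosSemidef

/-- Partial transpose with respect to the second tensor factor. -/
def partialTranspose {d n : ℕ} (X : Matrix (Fin d × Fin n) (Fin d × Fin n) ℂ) :
    Matrix (Fin d × Fin n) (Fin d × Fin n) ℂ :=
  fun p q => X (p.1, q.2) (q.1, p.2)

/-- σ¼ = ρA^{1/4} ⊗ₖ diagonal(μ^{1/4}): the fourth root of the product density matrix. -/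
noncomputable def sigmaFourth {d n : ℕ} (ρA : Matrix (Fin d) (Fin d) ℂ) (hρA : ρA.PosDef)
    (μ : Fin n → ℝ) : Matrix (Fin d × Fin n) (Fin d × Fin n) ℂ :=
  hρA.posSemidef.posSemidef_sqrt.sqrt ⊗ₖ
    Matrix.diagonal (fun s => ((μ s ^ (1/4 : ℝ) : ℝ) : ℂ))

/-!
Since `σ¼` is invertible, `P` is the whole cone of positive semidefinite matrices, and `Pτ` is its
preimage under the involution `Γ`. Both cones are self-dual for the pairing `Re Tr(A B)` on
Hermitian matrices, because `Tr(Γ A * Γ B) = Tr(A * B)`. Hence every `ξ ∈ P ∩ Pτ` pairs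
nonnegatively with `P ∪ Pτ`, and so with its closed convex hull. Conversely, if `X` lies outside
that closed convex cone, Hahn–Banach gives a functional that is `≤ 0` on the cone and `> 0`
at `X`; on Hermitian matrices it is `Re Tr(ξ ·)` for a Hermitian `ξ`, and self-duality puts
`-ξ` in `P ∩ Pτ`, while `Re Tr(-ξ X) < 0`.
-/

namespace Matrix

section Sqrt

variable {m 𝕜 : Type*} [Fintype m] [DecidableEq m] [RCLike 𝕜]

theorem PosSemidef.sqrt_mul_self {A : Matrix m m 𝕜} (hA : A.PosSemidef) :
    hA.sqrt * hA.sqrt = A := by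
  have hU : (star hA.1.eigenvectorUnitary : Matrix m m 𝕜) * hA.1.eigenvectorUnitary.1 = 1 := by
    simp
  conv_rhs => rw [hA.1.spectral_theorem, Unitary.conjStarAlgAut_apply]
  rw [sqrt, show ∀ U D S : Matrix m m 𝕜, U * D * S * (U * D * S) = U * (D * (S * U) * D) * S by
    intros; simp only [Matrix.mul_assoc], hU, Matrix.mul_one, diagonal_mul_diagonal]
  congr 3
  funext i
  simp only [Function.comp_apply]
  rw [← RCLike.ofReal_mul, Real.mul_self_sqrt (hA.eigenvalues_nonneg i)]

theorem PosDef.posDef_sqrt {A : Matrix m m 𝕜} (hA : A.PosDef) : hA.posSemidef.sqrt.PosDef := by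
  refine hA.posSemidef.posSemidef_sqrt.posDef_iff_det_ne_zero.2 fun h => hA.det_pos.ne' ?_
  rw [← hA.posSemidef.sqrt_mul_self, det_mul, h, zero_mul]

end Sqrt

variable {m : Type*} [Fintype m]

theorem setOf_exists_conj_posSemidef_eq [DecidableEq m] {U : Matrix m m ℂ} (hU : IsUnit U) :
    {X | ∃ M : Matrix m m ℂ, M.PosSemidef ∧ X = U * M * star U} = {X | X.PosSemidef} := by
  ext X
  refine ⟨?_, fun hX => ⟨U⁻¹ * X * star U⁻¹, hX.mul_mul_conjTranspose_same _, ?_⟩⟩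
  · rintro ⟨M, hM, rfl⟩
    exact hM.mul_mul_conjTranspose_same U
  · have hU' : IsUnit U.det := (isUnit_iff_isUnit_det U).1 hU
    rw [star_eq_conjTranspose, star_eq_conjTranspose, conjTranspose_nonsing_inv, ← mul_assoc,
      ← mul_assoc, mul_nonsing_inv _ hU', one_mul, mul_assoc,
      nonsing_inv_mul _ (by rwa [det_conjTranspose, isUnit_star]), mul_one]

theorem PosSemidef.re_trace_mul_nonneg [DecidableEq m] {A B : Matrix m m ℂ} (hA : A.PosSemidef)
    (hB : B.PosSemidef) : 0 ≤ ((A * B).trace).re := by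
  have hAB : (hA.sqrt * B * hA.sqrtᴴ).PosSemidef := hB.mul_mul_conjTranspose_same _
  rw [hA.posSemidef_sqrt.isHermitian.eq] at hAB
  rw [← hA.sqrt_mul_self, mul_assoc, trace_mul_comm, mul_assoc, ← mul_assoc]
  exact (Complex.nonneg_iff.1 hAB.trace_nonneg).1

theorem posSemidef_iff_forall_re_trace_mul_nonneg [DecidableEq m] {A : Matrix m m ℂ}
    (hA : A.IsHermitian) :
    A.PosSemidef ↔ ∀ M : Matrix m m ℂ, M.PosSemidef → 0 ≤ ((A * M).trace).re := by
  refine ⟨fun hA' M hM => hA'.re_trace_mul_nonneg hM, fun h => ?_⟩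
  refine PosSemidef.of_dotProduct_mulVec_nonneg hA fun x => ?_
  have hx := h _ (posSemidef_vecMulVec_self_star x)
  rw [mul_vecMulVec, trace_vecMulVec, dotProduct_comm] at hx
  exact Complex.nonneg_iff.2 ⟨hx, (hA.im_star_dotProduct_mulVec_self x).symm⟩

variable (m) in
noncomputable def reTraceMulForm : LinearMap.BilinForm ℝ (Matrix m m ℂ) :=
  LinearMap.mk₂ ℝ (fun A B => ((A * B).trace).re) (fun _ _ _ => by simp [add_mul])
    (fun _ _ _ => by simp) (fun _ _ _ => by simp [mul_add]) (fun _ _ _ => by simp)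

variable (m) in
theorem reTraceMulForm_nondegenerate : (reTraceMulForm m).Nondegenerate := by
  refine (LinearMap.IsRefl.nondegenerate_iff_separatingLeft fun A B h => ?_).2 fun A hA => ?_
  · simpa [reTraceMulForm, trace_mul_comm A B] using h
  have hre : ((A * Aᴴ).trace).re = 0 := hA Aᴴ
  have him := (Complex.nonneg_iff.1 (posSemidef_self_mul_conjTranspose A).trace_nonneg).2
  exact trace_mul_conjTranspose_self_eq_zero_iff.1 (Complex.ext hre him.symm)

theorem exists_isHermitian_re_trace_mul_eq (f : Module.Dual ℝ (Matrix m m ℂ)) :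
    ∃ ξ : Matrix m m ℂ, ξ.IsHermitian ∧ ∀ Y, Y.IsHermitian → ((ξ * Y).trace).re = f Y := by
  set e := (reTraceMulForm m).toDual (reTraceMulForm_nondegenerate m)
  set ξ₀ := e.symm f
  have hξ₀ : ∀ Y, ((ξ₀ * Y).trace).re = f Y := fun Y => by
    rw [← e.apply_symm_apply f, LinearMap.BilinForm.toDual_def]
    rfl
  refine ⟨(2⁻¹ : ℝ) • (ξ₀ + ξ₀ᴴ), (isHermitian_add_transpose_self ξ₀).smul (.all _),
    fun Y hY => ?_⟩
  have hstar : ((ξ₀ᴴ * Y).trace).re = ((ξ₀ * Y).trace).re := by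
    rw [← hY.eq, ← conjTranspose_mul, trace_conjTranspose, trace_mul_comm, hY.eq]
    exact Complex.conj_re _
  rw [smul_mul, add_mul, trace_smul, trace_add, Complex.smul_re, Complex.add_re, hstar, hξ₀]
  ring

instance locallyConvexSpace {n 𝕜 E : Type*} [Semiring 𝕜] [PartialOrder 𝕜]
    [AddCommMonoid E] [Module 𝕜 E] [TopologicalSpace E] [LocallyConvexSpace 𝕜 E] :
    LocallyConvexSpace 𝕜 (Matrix m n E) :=
  Pi.locallyConvexSpace

end Matrix

theorem exists_nonpos_on_of_notMem_closure_convexHull {E : Type*} [AddCommGroup E] [Module ℝ E]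
    [TopologicalSpace E] [IsTopologicalAddGroup E] [ContinuousSMul ℝ E] [LocallyConvexSpace ℝ E]
    {C : Set E} (h₀ : (0 : E) ∈ C) (hC : ∀ y ∈ C, ∀ t : ℝ, 0 ≤ t → t • y ∈ C) {x : E}
    (hx : x ∉ closure (convexHull ℝ C)) :
    ∃ f : StrongDual ℝ E, (∀ y ∈ C, f y ≤ 0) ∧ 0 < f x := by
  obtain ⟨f, u, hfu, hux⟩ :=
    geometric_hahn_banach_closed_point (convex_convexHull ℝ C).closure isClosed_closure hx
  have hf : ∀ y ∈ C, f y < u := fun y hy => hfu y (subset_closure (subset_convexHull ℝ C hy))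
  have hu : 0 < u := by simpa using hf 0 h₀
  refine ⟨f, fun y hy => ?_, hu.trans hux⟩
  by_contra! hpos
  have := hf _ (hC y hy (u / f y) (div_nonneg hu.le hpos.le))
  rw [map_smul, smul_eq_mul, div_mul_cancel₀ _ hpos.ne'] at this
  exact lt_irrefl _ this

section PartialTranspose

open Matrix

variable {d n : ℕ}

theorem partialTranspose_involutive :
    Function.Involutive (partialTranspose : Matrix (Fin d × Fin n) (Fin d × Fin n) ℂ → _) :=
  fun _ => rfl

theorem Matrix.IsHermitian.partialTranspose {A : Matrix (Fin d × Fin n) (Fin d × Fin n) ℂ}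
    (hA : A.IsHermitian) : (partialTranspose A).IsHermitian := by
  ext p q
  exact congrFun (congrFun hA (p.1, q.2)) (q.1, p.2)

theorem trace_partialTranspose_mul_partialTranspose
    (A B : Matrix (Fin d × Fin n) (Fin d × Fin n) ℂ) :
    (partialTranspose A * partialTranspose B).trace = (A * B).trace := by
  simp only [trace, diag, mul_apply, partialTranspose, Fintype.sum_prod_type]
  refine Finset.sum_congr rfl fun i _ => ?_
  rw [Finset.sum_congr rfl fun _ _ => Finset.sum_comm, Finset.sum_comm]
  exact Finset.sum_congr rfl fun _ _ => Finset.sum_comm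

theorem posSemidef_partialTranspose_iff_forall_re_trace_mul_nonneg
    {A : Matrix (Fin d × Fin n) (Fin d × Fin n) ℂ} (hA : A.IsHermitian) :
    (partialTranspose A).PosSemidef ↔
      ∀ M, (partialTranspose M).PosSemidef → 0 ≤ ((A * M).trace).re := by
  rw [posSemidef_iff_forall_re_trace_mul_nonneg hA.partialTranspose,
    partialTranspose_involutive.surjective.forall]
  simp only [trace_partialTranspose_mul_partialTranspose]

theorem re_trace_mul_nonneg_of_mem_closure_convexHull
    {ξ X : Matrix (Fin d × Fin n) (Fin d × Fin n) ℂ}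
    (hξ : ξ.PosSemidef) (hξτ : (partialTranspose ξ).PosSemidef)
    (hX : X ∈ closure (convexHull ℝ
      ({Y | Y.PosSemidef} ∪ partialTranspose ⁻¹' {Y | Y.PosSemidef}))) :
    0 ≤ ((ξ * X).trace).re := by
  refine closure_minimal (convexHull_min ?_ ((convex_Ici 0).linear_preimage (reTraceMulForm _ ξ)))
    (isClosed_Ici.preimage (LinearMap.continuous_of_finiteDimensional _)) hX
  rintro Y (hY | hY)
  · exact hξ.re_trace_mul_nonneg hY
  · exact (posSemidef_partialTranspose_iff_forall_re_trace_mul_nonneg hξ.isHermitian).1 hξτ Y hY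

theorem mem_closure_convexHull_of_forall_re_trace_mul_nonneg
    {X : Matrix (Fin d × Fin n) (Fin d × Fin n) ℂ} (hX : X.IsHermitian)
    (h : ∀ ξ : Matrix (Fin d × Fin n) (Fin d × Fin n) ℂ, ξ.PosSemidef →
      (partialTranspose ξ).PosSemidef → 0 ≤ ((ξ * X).trace).re) :
    X ∈ closure (convexHull ℝ
      ({Y | Y.PosSemidef} ∪ partialTranspose ⁻¹' {Y | Y.PosSemidef})) := by
  by_contra hXmem
  obtain ⟨f, hf, hfX⟩ := exists_nonpos_on_of_notMem_closure_convexHull (.inl PosSemidef.zero)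
    (fun _ hY _ ht => hY.imp (PosSemidef.smul · ht) (PosSemidef.smul · ht)) hXmem
  obtain ⟨ξ, hξ, hfξ⟩ := exists_isHermitian_re_trace_mul_eq f.toLinearMap
  have hneg : ∀ Y, Y.IsHermitian → (0 ≤ ((-ξ * Y).trace).re ↔ f Y ≤ 0) := fun Y hY => by
    rw [neg_mul, trace_neg, Complex.neg_re, hfξ Y hY, neg_nonneg, ContinuousLinearMap.coe_coe]
  have hP : (-ξ).PosSemidef := (posSemidef_iff_forall_re_trace_mul_nonneg hξ.neg).2
    fun M hM => (hneg M hM.isHermitian).2 (hf M (.inl hM))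
  have hPτ : (partialTranspose (-ξ)).PosSemidef :=
    (posSemidef_partialTranspose_iff_forall_re_trace_mul_nonneg hξ.neg).2
      fun M hM => (hneg M (partialTranspose_involutive M ▸ hM.isHermitian.partialTranspose)).2
        (hf M (.inr hM))
  exact hfX.not_ge ((hneg X hX).1 (h _ hP hPτ))

end PartialTranspose

theorem sigmaFourth_posDef {d n : ℕ} {ρA : Matrix (Fin d) (Fin d) ℂ} (hρA : ρA.PosDef)
    {μ : Fin n → ℝ} (hμ : ∀ s, 0 < μ s) : (sigmaFourth ρA hρA μ).PosDef :=
  hρA.posDef_sqrt.posDef_sqrt.kronecker <| Matrix.posDef_diagonal_iff.2 fun s =>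
    by exact_mod_cast Real.rpow_pos_of_pos (hμ s) _

theorem stmt_6_general {d n : ℕ}
    (ρA : Matrix (Fin d) (Fin d) ℂ) (hρA : ρA.PosDef)
    (μ : Fin n → ℝ) (hμ : ∀ s, 0 < μ s)
    (P : Set (Matrix (Fin d × Fin n) (Fin d × Fin n) ℂ))
    (hP : P = { X | ∃ M : Matrix (Fin d × Fin n) (Fin d × Fin n) ℂ,
          M.PosSemidef ∧ X = sigmaFourth ρA hρA μ * M * sigmaFourth ρA hρA μ })
    (Pτ : Set (Matrix (Fin d × Fin n) (Fin d × Fin n) ℂ))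
    (hPτ : Pτ = partialTranspose '' P)
    (X : Matrix (Fin d × Fin n) (Fin d × Fin n) ℂ) (hX : X.IsHermitian) :
    X ∈ closure (convexHull ℝ (P ∪ Pτ)) ↔
      ∀ ξ ∈ P ∩ Pτ, 0 ≤ ((ξ * X).trace).re := by
  have hσ := sigmaFourth_posDef hρA hμ
  replace hP : P = {Y | Y.PosSemidef} := by
    rw [hP, ← Matrix.setOf_exists_conj_posSemidef_eq hσ.isUnit, star_eq_conjTranspose,
      hσ.isHermitian.eq]
  rw [partialTranspose_involutive.image_eq_preimage_symm, hP] at hPτ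
  subst hP hPτ
  exact ⟨fun hXmem ξ hξ => re_trace_mul_nonneg_of_mem_closure_convexHull hξ.1 hξ.2 hXmem,
    fun h => mem_closure_convexHull_of_forall_re_trace_mul_nonneg hX fun ξ hξ hξτ => h ξ ⟨hξ, hξτ⟩⟩

theorem stmt_6 {d n : ℕ} (hd : 1 ≤ d) (hn : 1 ≤ n)
    (ρA : Matrix (Fin d) (Fin d) ℂ) (hρA : ρA.PosDef)
    (μ : Fin n → ℝ) (hμ : ∀ s, 0 < μ s)
    (P : Set (Matrix (Fin d × Fin n) (Fin d × Fin n) ℂ))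
    (hP : P = { X | ∃ M : Matrix (Fin d × Fin n) (Fin d × Fin n) ℂ,
          M.PosSemidef ∧ X = sigmaFourth ρA hρA μ * M * sigmaFourth ρA hρA μ })
    (Pτ : Set (Matrix (Fin d × Fin n) (Fin d × Fin n) ℂ))
    (hPτ : Pτ = partialTranspose '' P)
    (X : Matrix (Fin d × Fin n) (Fin d × Fin n) ℂ) (hX : X.IsHermitian) :
    X ∈ closure (convexHull ℝ (P ∪ Pτ)) ↔
      ∀ ξ ∈ P ∩ Pτ, 0 ≤ ((ξ * X).trace).re :=
  stmt_6_general ρA hρA μ hμ P hP Pτ hPτ X hX
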